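/- arXiv:2107.01687 — 2 statements merged into one kernel-verified Lean document; each statement's English description precedes it below -/
import Mathlib

section
/- If M is an irreducible nonnegative square matrix and there exists a strictly positive vector v with M v = v, then the spectral radius of M equals 1. -/
/-!
For a complex eigenpair `M x = μ x`, let `c` be the largest ratio `‖x t‖ / v t`, attained at `s`,
so that `‖x‖ ≤ c v` entrywise with equality at `s`. As `M ≥ 0`, row `s` of the eigen-equation gives
`|μ| ‖x s‖ ≤ c (M v) s = c v s = ‖x s‖`, so `|μ| ≤ 1`; and `v` itself is an eigenvector for `1`.
-/

open Matrix Module.End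

theorem Matrix.mem_spectrum_iff_exists_mulVec_eq_smul {K n : Type*} [Field K] [Fintype n]
    [DecidableEq n] (A : Matrix n n K) (μ : K) :
    μ ∈ spectrum K A ↔ ∃ x ≠ 0, A *ᵥ x = μ • x := by
  rw [← spectrum_toLin', ← hasEigenvalue_iff_mem_spectrum, hasEigenvalue_iff,
    Submodule.ne_bot_iff]
  simp only [mem_eigenspace_iff, toLin'_apply]
  exact ⟨fun ⟨x, hx, hx0⟩ => ⟨x, hx0, hx⟩, fun ⟨x, hx0, hx⟩ => ⟨x, hx, hx0⟩⟩

theorem spectralRadius_eq_nnnorm_of_forall_nnnorm_le {𝕜 A : Type*} [NormedField 𝕜] [Ring A]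
    [Algebra 𝕜 A] {a : A} {k : 𝕜} (hk : k ∈ spectrum 𝕜 a)
    (hle : ∀ μ ∈ spectrum 𝕜 a, ‖μ‖₊ ≤ ‖k‖₊) :
    spectralRadius 𝕜 a = ‖k‖₊ :=
  le_antisymm (iSup₂_le fun μ hμ => ENNReal.coe_le_coe.2 (hle μ hμ))
    (le_iSup₂ (α := ENNReal) k hk)

section NonnegMatrix

variable {S : Type*} [Fintype S] {M : Matrix S S ℝ}

theorem norm_map_ofReal_mulVec_le (hM : ∀ s t, 0 ≤ M s t) (x : S → ℂ) (s : S) :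
    ‖(M.map Complex.ofReal *ᵥ x) s‖ ≤ (M *ᵥ fun t => ‖x t‖) s := by
  refine (norm_sum_le _ _).trans (Finset.sum_le_sum fun t _ => ?_)
  simp [Real.norm_of_nonneg (hM s t)]

/-- The Collatz–Wielandt bound. -/
theorem norm_le_of_mulVec_le_smul (hM : ∀ s t, 0 ≤ M s t) {v : S → ℝ} (hv : ∀ s, 0 < v s)
    {r : ℝ} (hMv : M *ᵥ v ≤ r • v) {μ : ℂ} {x : S → ℂ} (hx : x ≠ 0)
    (hμ : M.map Complex.ofReal *ᵥ x = μ • x) : ‖μ‖ ≤ r := by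
  obtain ⟨t, ht⟩ := Function.ne_iff.1 hx
  have : Nonempty S := ⟨t⟩
  obtain ⟨s, hs⟩ := Finite.exists_max fun t => ‖x t‖ / v t
  set c := ‖x s‖ / v s
  have hbound : ∀ t, ‖x t‖ ≤ c * v t := fun t => (div_le_iff₀ (hv t)).1 (hs t)
  have hc : 0 < c := (div_pos (norm_pos_iff.2 ht) (hv t)).trans_le (hs t)
  have hxs : ‖x s‖ = c * v s := (div_mul_cancel₀ _ (hv s).ne').symm
  have hxs_pos : 0 < ‖x s‖ := hxs ▸ mul_pos hc (hv s)
  refine le_of_mul_le_mul_right ?_ hxs_pos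
  calc ‖μ‖ * ‖x s‖ = ‖(M.map Complex.ofReal *ᵥ x) s‖ := by rw [hμ, Pi.smul_apply, norm_smul]
    _ ≤ (M *ᵥ fun t => ‖x t‖) s := norm_map_ofReal_mulVec_le hM x s
    _ ≤ (M *ᵥ (c • v)) s :=
        Finset.sum_le_sum fun t _ => mul_le_mul_of_nonneg_left (hbound t) (hM s t)
    _ = c * (M *ᵥ v) s := by rw [mulVec_smul, Pi.smul_apply, smul_eq_mul]
    _ ≤ c * (r * v s) := mul_le_mul_of_nonneg_left (hMv s) hc.le
    _ = r * ‖x s‖ := by rw [hxs]; ring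

end NonnegMatrix

theorem irreducible_pos_fixed_vector_spectralRadius_eq_one_general {S : Type} [Fintype S]
    [DecidableEq S] [Nonempty S] (M : Matrix S S ℝ) (hM : ∀ s t, 0 ≤ M s t)
    (v : S → ℝ) (hv : ∀ s, 0 < v s)
    (hfix : M.mulVec v = v) :
    spectralRadius ℂ (M.map Complex.ofReal) = 1 := by
  have hone : (1 : ℂ) ∈ spectrum ℂ (M.map Complex.ofReal) := by
    refine (mem_spectrum_iff_exists_mulVec_eq_smul _ _).2 ⟨Complex.ofReal ∘ v, ?_, ?_⟩
    · exact Function.ne_iff.2 ⟨Classical.arbitrary S, by simpa using (hv _).ne'⟩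
    · ext s
      rw [one_smul]
      exact (RingHom.map_mulVec Complex.ofRealHom M v s).symm.trans (by rw [hfix]; rfl)
  have hle : ∀ μ ∈ spectrum ℂ (M.map Complex.ofReal), ‖μ‖₊ ≤ ‖(1 : ℂ)‖₊ := by
    intro μ hμ
    obtain ⟨x, hx, hμx⟩ := (mem_spectrum_iff_exists_mulVec_eq_smul _ _).1 hμ
    have := norm_le_of_mulVec_le_smul hM hv (r := 1) (by rw [hfix, one_smul]) hx hμx
    simpa [← NNReal.coe_le_coe] using this
  simpa using spectralRadius_eq_nnnorm_of_forall_nnnorm_le hone hle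

/-- an irreducible nonnegative matrix with a strictly positive fixed vector
has spectral radius 1. -/
theorem irreducible_pos_fixed_vector_spectralRadius_eq_one {S : Type} [Fintype S]
    [DecidableEq S] [Nonempty S] (M : Matrix S S ℝ) (hM : ∀ s t, 0 ≤ M s t)
    (hirr : ∀ s t : S, Relation.ReflTransGen (fun a b => 0 < M a b) s t)
    (v : S → ℝ) (hv : ∀ s, 0 < v s)
    (hfix : M.mulVec v = v) :
    spectralRadius ℂ (M.map Complex.ofReal) = 1 :=
  irreducible_pos_fixed_vector_spectralRadius_eq_one_general M hM v hv hfix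
end

section
/- In the subset construction of a finite automaton without diamonds, every state of the determinization reachable from a singleton, when transitioning on a letter X, satisfies: for every state r in the successor set there is exactly one state q in the current set with a transition q →^X r. Formally: if A = (Q, Γ, δ) has no diamonds and P ⊆ Q is reachable in the subset construction from a singleton {q₀}, then for each letter X and each r ∈ δ(P, X) there is exactly one q ∈ P with (q, X, r) ∈ δ. -/
/-- A finite path in an automaton with transition relation `δ`, labelled by `u`. -/
def FinPath {Q Γ : Type} (δ : Q → Γ → Q → Prop) {n : ℕ}
    (u : Fin n → Γ) (g : Fin (n + 1) → Q) : Prop :=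
  ∀ i : Fin n, δ (g i.castSucc) (u i) (g i.succ)

/-- One step of the subset construction. -/
def stepSet {Q Γ : Type} (δ : Q → Γ → Q → Prop) (P : Set Q) (X : Γ) : Set Q :=
  {r | ∃ q ∈ P, δ q X r}

/-- The subset construction applied along a finite word. -/
def runSet {Q Γ : Type} (δ : Q → Γ → Q → Prop) (P : Set Q) (u : List Γ) : Set Q :=
  u.foldl (stepSet δ) P

/-!
Two distinct predecessors `q ≠ q'` of `r` in `δ(P, X)`, with `P` reached from `{q₀}` by the word
`u`, are the endpoints of two `u`-labelled paths from `q₀`. Extending both by their `X`-edge into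
`r` gives two `uX`-labelled paths from `q₀` to `r` that differ at position `|u|`: a diamond.
-/

variable {Q Γ : Type} {δ : Q → Γ → Q → Prop}

lemma runSet_append_singleton (P : Set Q) (v : List Γ) (X : Γ) :
    runSet δ P (v ++ [X]) = stepSet δ (runSet δ P v) X := by
  simp [runSet, List.foldl_append]

lemma FinPath.snoc {n : ℕ} {u : Fin n → Γ} {g : Fin (n + 1) → Q} (hg : FinPath δ u g)
    {X : Γ} {s : Q} (hs : δ (g (Fin.last n)) X s) :
    FinPath δ (Fin.snoc u X) (Fin.snoc g s : Fin (n + 2) → Q) := by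
  intro i
  cases i using Fin.lastCases with
  | last =>
    rw [Fin.succ_last, Fin.snoc_last, Fin.snoc_last, Fin.snoc_castSucc]
    exact hs
  | cast j =>
    rw [Fin.succ_castSucc, Fin.snoc_castSucc, Fin.snoc_castSucc, Fin.snoc_castSucc]
    exact hg j

lemma exists_finPath_of_mem_runSet_ofFn (q₀ : Q) {n : ℕ} (w : Fin n → Γ) {q : Q}
    (hq : q ∈ runSet δ {q₀} (List.ofFn w)) :
    ∃ g : Fin (n + 1) → Q, g 0 = q₀ ∧ g (Fin.last n) = q ∧ FinPath δ w g := by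
  induction n generalizing q with
  | zero =>
    refine ⟨fun _ => q₀, rfl, ?_, fun i => i.elim0⟩
    simpa [runSet] using hq.symm
  | succ n ih =>
    rw [List.ofFn_succ', List.concat_eq_append, runSet_append_singleton] at hq
    obtain ⟨p, hp, hpq⟩ := hq
    obtain ⟨g, hg₀, hgp, hg⟩ := ih (Fin.init w) hp
    refine ⟨Fin.snoc g q, ?_, Fin.snoc_last _ _, ?_⟩
    · rwa [← Fin.castSucc_zero, Fin.snoc_castSucc]
    · rw [← Fin.snoc_init_self w]
      exact hg.snoc (hgp ▸ hpq)

/-- in the subset construction of an automaton without diamonds, for every set `P`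
reachable from a singleton `{q₀}`, every letter `X` and every `r ∈ δ(P, X)`, there is exactly
one `q ∈ P` with a transition `q →^X r`. -/
theorem subset_construction_unique_predecessor {Q Γ : Type}
    (δ : Q → Γ → Q → Prop)
    -- no diamonds: no two distinct equally-labelled paths between the same two states
    (hnodiamond : ¬ ∃ (p r : Q) (n : ℕ) (u : Fin (n + 1) → Γ) (g₁ g₂ : Fin (n + 2) → Q),
        FinPath δ u g₁ ∧ FinPath δ u g₂ ∧
        g₁ 0 = p ∧ g₂ 0 = p ∧
        g₁ (Fin.last (n + 1)) = r ∧ g₂ (Fin.last (n + 1)) = r ∧ g₁ ≠ g₂)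
    (q₀ : Q) (u : List Γ) (X : Γ) (r : Q)
    (hr : r ∈ stepSet δ (runSet δ {q₀} u) X) :
    ∃! q : Q, q ∈ runSet δ {q₀} u ∧ δ q X r := by
  obtain ⟨q, hq, hqr⟩ := hr
  refine ⟨q, ⟨hq, hqr⟩, fun q' ⟨hq', hq'r⟩ => by_contra fun hne => hnodiamond ?_⟩
  rw [← List.ofFn_get u] at hq hq'
  obtain ⟨g, hg₀, hgq, hg⟩ := exists_finPath_of_mem_runSet_ofFn q₀ u.get hq
  obtain ⟨g', hg'₀, hg'q, hg'⟩ := exists_finPath_of_mem_runSet_ofFn q₀ u.get hq'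
  refine ⟨q₀, r, u.length, Fin.snoc u.get X, Fin.snoc g' r, Fin.snoc g r,
    hg'.snoc (hg'q ▸ hq'r), hg.snoc (hgq ▸ hqr), ?_, ?_, Fin.snoc_last _ _, Fin.snoc_last _ _,
    fun h => hne ?_⟩
  · rwa [← Fin.castSucc_zero, Fin.snoc_castSucc]
  · rwa [← Fin.castSucc_zero, Fin.snoc_castSucc]
  · rw [← hgq, ← hg'q, (Fin.snoc_inj.mp h).1]
end
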